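/- arXiv:1604.03216 — 2 statements merged into one kernel-verified Lean document; each statement's English description precedes it below -/
import Mathlib

section
/- Let K be a finite simplicial complex, L₁, L₂ subcomplexes such that L₁, L₂ and L₁ ∪ L₂ are full subcomplexes of K. Set W_i = ∪{σ ∈ K : σ ∩ L_i = ∅} and L₁₂ = L₁ ∩ L₂. Then W₁ ∪ W₂ = ∪{σ ∈ K : σ ∩ L₁₂ = ∅}. -/
/-!
STATEMENT 5: Let `K` be a finite simplicial complex, `L₁, L₂` subcomplexes such that `L₁`,
`L₂` and `L₁ ∪ L₂` are full subcomplexes of `K`.  With `W_i = ∪{σ ∈ K : σ ∩ L_i = ∅}` and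
`L₁₂ = L₁ ∩ L₂`, one has `W₁ ∪ W₂ = ∪{σ ∈ K : σ ∩ L₁₂ = ∅}`.

A simplicial complex is encoded combinatorially as a downward closed set of finite sets of
vertices.  For a full subcomplex `L`, a simplex `σ` of `K` satisfies `σ ∩ |L| = ∅` iff no
vertex of `σ` is a vertex of `L`; the equality of the unions of simplices is the equality of
the corresponding sets of simplices.
-/
theorem stmt_5 {V : Type*} (K L₁ L₂ : Set (Finset V))
    (hKfin : K.Finite)
    (hKdc : ∀ s ∈ K, ∀ t ⊆ s, t ∈ K)
    (hL₁K : L₁ ⊆ K) (hL₂K : L₂ ⊆ K)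
    (hL₁dc : ∀ s ∈ L₁, ∀ t ⊆ s, t ∈ L₁)
    (hL₂dc : ∀ s ∈ L₂, ∀ t ⊆ s, t ∈ L₂)
    (hfull₁ : ∀ s ∈ K, (∀ v ∈ s, {v} ∈ L₁) → s ∈ L₁)
    (hfull₂ : ∀ s ∈ K, (∀ v ∈ s, {v} ∈ L₂) → s ∈ L₂)
    (hfull₁₂ : ∀ s ∈ K, (∀ v ∈ s, {v} ∈ L₁ ∪ L₂) → s ∈ L₁ ∪ L₂) :
    {s ∈ K | ∀ v ∈ s, {v} ∉ L₁} ∪ {s ∈ K | ∀ v ∈ s, {v} ∉ L₂}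
      = {s ∈ K | ∀ v ∈ s, ¬ ({v} ∈ L₁ ∧ {v} ∈ L₂)} := by
  classical
  ext s
  simp only [Set.mem_union, Set.mem_setOf_eq]
  constructor
  · rintro (⟨hs, h⟩ | ⟨hs, h⟩) <;>
      exact ⟨hs, fun v hv hc => h v hv (by tauto)⟩
  · rintro ⟨hs, h⟩
    by_contra hcon
    push_neg at hcon
    obtain ⟨v, hv, hv1⟩ := hcon.1 hs
    obtain ⟨w, hw, hw2⟩ := hcon.2 hs
    set t : Finset V := s.filter (fun x => {x} ∈ L₁ ∨ {x} ∈ L₂) with ht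
    have htK : t ∈ K := hKdc s hs t (Finset.filter_subset _ _)
    have htu : t ∈ L₁ ∪ L₂ := hfull₁₂ t htK (by
      intro x hx
      rcases Finset.mem_filter.1 hx with ⟨_, h1 | h2⟩
      · exact Or.inl h1
      · exact Or.inr h2)
    have hvt : v ∈ t := Finset.mem_filter.2 ⟨hv, Or.inl hv1⟩
    have hwt : w ∈ t := Finset.mem_filter.2 ⟨hw, Or.inr hw2⟩
    rcases htu with h1 | h2
    · exact h w hw ⟨hL₁dc t h1 {w} (Finset.singleton_subset_iff.2 hwt), hw2⟩
    · exact h v hv ⟨hv1, hL₂dc t h2 {v} (Finset.singleton_subset_iff.2 hvt)⟩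
end

section
/- Under the hypotheses of the previous item, the restriction of T₁ ∪ T₂ to W₁ ∪ W₂ vanishes, i.e., (T₁ ∪ T₂)(σ) = 0 for every (p+q)-simplex σ contained in W₁ ∪ W₂. -/
noncomputable section

/-!
STATEMENT 7: Under the hypotheses of STATEMENT 6 (full subcomplexes `L₁, L₂` with vertex
sets `VL₁, VL₂`, `W_i = ∪{σ : σ ∩ L_i = ∅}`, `T₁ ∈ C^p(K,W₁)`, `T₂ ∈ C^q(K,W₂)`), the
restriction of `T₁ ∪ T₂` to `W₁ ∪ W₂` vanishes: `(T₁ ∪ T₂)(σ) = 0` for every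
`(p+q)`-simplex `σ` contained in `W₁ ∪ W₂`.  A simplex of the complex is contained in
`W₁ ∪ W₂` precisely when it lies in `W₁` or in `W₂`, i.e. when all of its vertices avoid
`VL₁` or all of its vertices avoid `VL₂`.
-/

abbrev Splx (V : Type*) (n : ℕ) := Fin (n + 1) → V
abbrev SCochain (V : Type*) (n : ℕ) := Splx V n → ℚ

variable {V : Type*}

/-- The simplicial cup product. -/
def scup {p q m : ℕ} (T₁ : SCochain V p) (T₂ : SCochain V q) (h : m = p + q) :
    SCochain V m := fun s =>
  T₁ (fun i : Fin (p + 1) => s (Fin.castLE (by omega) i)) *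
    T₂ (fun j : Fin (q + 1) => s ⟨p + (j : ℕ), by omega⟩)

theorem stmt_7 [LinearOrder V] (p q : ℕ)
    (VL₁ VL₂ : Set V)
    (T₁ : SCochain V p) (T₂ : SCochain V q)
    (hT₁W : ∀ s : Splx V p, (∀ i, s i ∉ VL₁) → T₁ s = 0)
    (hT₂W : ∀ s : Splx V q, (∀ i, s i ∉ VL₂) → T₂ s = 0)
    (s : Splx V (p + q)) (hs : StrictMono s)
    (hW : (∀ i, s i ∉ VL₁) ∨ (∀ i, s i ∉ VL₂)) :
    scup T₁ T₂ (rfl : p + q = p + q) s = 0 := by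
  unfold scup
  rcases hW with h | h
  · rw [hT₁W _ (fun i => h _), zero_mul]
  · rw [hT₂W _ (fun i => h _), mul_zero]

end
end
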